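/- Let {aᵢ ⊗ bᵢ : i = 1…d} be an orthonormal product basis of ℂ^{d₁} ⊗ ℂ^{d₂}, d = d₁d₂, with unit vectors aᵢ ∈ ℂ^{d₁}, bᵢ ∈ ℂ^{d₂}. Then for every index κ ∈ {1…d}, the set of vectors {a_κ} ∪ {aᵢ : i ≠ κ and ⟨b_κ, bᵢ⟩ ≠ 0} spans ℂ^{d₁}. In particular, the set I_κ = {i ≠ κ : ⟨b_κ, bᵢ⟩ ≠ 0} contains at least d₁ − 1 elements, and for each i ∈ I_κ one has ⟨a_κ, aᵢ⟩ = 0. -/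

import Mathlib

/-
Contract the first factor against `b_κ`: if `v ⊥ a_κ` and `v ⊥ aᵢ` for every
`i ∈ I_κ`, then `v ⊗ b_κ` is orthogonal to every basis vector `aᵢ ⊗ bᵢ`, because
`⟨aᵢ ⊗ bᵢ, v ⊗ b_κ⟩ = ⟨aᵢ, v⟩⟨bᵢ, b_κ⟩` and one of the two factors vanishes. Hence
`v ⊗ b_κ = 0`, and `v = 0` since `b_κ ≠ 0`. The cardinality bound is dimension counting, and
`⟨a_κ, aᵢ⟩ = 0` for `i ∈ I_κ` is orthogonality of the basis vectors read through the same
product formula.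
-/

open scoped ComplexInnerProductSpace

/-- The tensor product of two vectors, realized concretely on `EuclideanSpace`:
`(a ⊗ b) (i, j) = a i * b j`. -/
noncomputable def eprod {ι γ : Type*} (a : EuclideanSpace ℂ ι) (b : EuclideanSpace ℂ γ) :
    EuclideanSpace ℂ (ι × γ) :=
  WithLp.toLp 2 (fun p => a p.1 * b p.2)

lemma eq_zero_of_inner_left_eq_zero_of_span_eq_top {E ι : Type*} [NormedAddCommGroup E]
    [InnerProductSpace ℂ E] {e : ι → E} (hspan : Submodule.span ℂ (Set.range e) = ⊤) {w : E}
    (hw : ∀ i, ⟪e i, w⟫ = 0) : w = 0 := by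
  have hortho : Submodule.span ℂ (Set.range e) ⟂ Submodule.span ℂ {w} :=
    Submodule.isOrtho_span.2 (by rintro _ ⟨i, rfl⟩ _ rfl; exact hw i)
  rwa [hspan, Submodule.isOrtho_top_left, Submodule.span_singleton_eq_bot] at hortho

lemma finrank_le_ncard_of_span_image_eq_top {K V ι : Type*} [DivisionRing K] [AddCommGroup V]
    [Module K V] [Finite ι] {f : ι → V} {s : Set ι}
    (hspan : Submodule.span K (f '' s) = ⊤) : Module.finrank K V ≤ s.ncard := by
  have : Fintype (f '' s) := Fintype.ofFinite _
  calc Module.finrank K V = Module.finrank K (Submodule.span K (f '' s)) := by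
        rw [hspan, finrank_top]
    _ ≤ (f '' s).toFinset.card := finrank_span_le_card _
    _ = (f '' s).ncard := (Set.ncard_eq_toFinset_card' _).symm
    _ ≤ s.ncard := Set.ncard_image_le

section eprod

variable {ι γ : Type*} [Fintype ι] [Fintype γ]

lemma inner_eprod (a c : EuclideanSpace ℂ ι) (b d : EuclideanSpace ℂ γ) :
    ⟪eprod a b, eprod c d⟫ = ⟪a, c⟫ * ⟪b, d⟫ := by
  simp only [PiLp.inner_apply, RCLike.inner_apply, eprod, Fintype.sum_prod_type,
    Finset.sum_mul, Finset.mul_sum, map_mul]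
  rw [Finset.sum_comm]
  refine Finset.sum_congr rfl fun i _ => Finset.sum_congr rfl fun j _ => ?_
  ring

lemma eprod_eq_zero_iff {a : EuclideanSpace ℂ ι} {b : EuclideanSpace ℂ γ} :
    eprod a b = 0 ↔ a = 0 ∨ b = 0 := by
  rw [← inner_self_eq_zero (𝕜 := ℂ), inner_eprod, mul_eq_zero, inner_self_eq_zero,
    inner_self_eq_zero]

lemma span_image_inner_ne_zero_eq_top {σ : Type*} {a : σ → EuclideanSpace ℂ ι}
    {b : σ → EuclideanSpace ℂ γ}
    (hspan : Submodule.span ℂ (Set.range fun i => eprod (a i) (b i)) = ⊤)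
    {y : EuclideanSpace ℂ γ} (hy : y ≠ 0) :
    Submodule.span ℂ (a '' {i | ⟪y, b i⟫ ≠ 0}) = ⊤ := by
  rw [← Submodule.orthogonal_eq_bot_iff, Submodule.eq_bot_iff]
  intro v hv
  have hva : ∀ i, ⟪y, b i⟫ ≠ 0 → ⟪a i, v⟫ = 0 := fun i hi =>
    Submodule.inner_right_of_mem_orthogonal (Submodule.subset_span (Set.mem_image_of_mem a hi)) hv
  have hvy : eprod v y = 0 := by
    refine eq_zero_of_inner_left_eq_zero_of_span_eq_top hspan fun i => ?_
    rw [inner_eprod]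
    by_cases hi : ⟪y, b i⟫ = 0
    · rw [inner_eq_zero_symm.1 hi, mul_zero]
    · rw [hva i hi, zero_mul]
  exact (eprod_eq_zero_iff.1 hvy).resolve_right hy

end eprod

theorem product_basis_first_factor_span_general {d₁ d₂ : ℕ}
    (a : Fin (d₁ * d₂) → EuclideanSpace ℂ (Fin d₁))
    (b : Fin (d₁ * d₂) → EuclideanSpace ℂ (Fin d₂))
    (hb : ∀ i, ‖b i‖ = 1)
    (hB : Orthonormal ℂ (fun i => eprod (a i) (b i)))
    (κ : Fin (d₁ * d₂)) :
    Submodule.span ℂ (insert (a κ) (a '' {i | i ≠ κ ∧ ⟪b κ, b i⟫ ≠ 0})) = ⊤ ∧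
    d₁ - 1 ≤ {i | i ≠ κ ∧ ⟪b κ, b i⟫ ≠ 0}.ncard ∧
    ∀ i, i ≠ κ → ⟪b κ, b i⟫ ≠ 0 → ⟪a κ, a i⟫ = 0 := by
  set I := {i | i ≠ κ ∧ ⟪b κ, b i⟫ ≠ 0}
  have hbκ : b κ ≠ 0 := norm_ne_zero_iff.1 (by simp [hb κ])
  have hspan : Submodule.span ℂ (Set.range fun i => eprod (a i) (b i)) = ⊤ :=
    hB.linearIndependent.span_eq_top_of_card_eq_finrank' (by simp [finrank_euclideanSpace])
  have hI : insert κ I = {i | ⟪b κ, b i⟫ ≠ 0} := by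
    ext i
    by_cases hi : i = κ
    · simp [I, hi, hbκ]
    · simp [I, hi]
  have htop : Submodule.span ℂ (a '' insert κ I) = ⊤ :=
    hI ▸ span_image_inner_ne_zero_eq_top hspan hbκ
  refine ⟨Set.image_insert_eq ▸ htop, ?_, fun i hi hbi => ?_⟩
  · have hdim := finrank_le_ncard_of_span_image_eq_top htop
    rw [finrank_euclideanSpace_fin] at hdim
    have := Set.ncard_insert_le κ I
    omega
  · have h : ⟪eprod (a κ) (b κ), eprod (a i) (b i)⟫ = 0 := hB.2 (Ne.symm hi)
    rw [inner_eprod] at h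
    exact (mul_eq_zero.1 h).resolve_right hbi

/-- For an orthonormal product basis `{aᵢ ⊗ bᵢ : i = 1…d}` of `ℂ^{d₁} ⊗ ℂ^{d₂}` and any
index `κ`, the set `{a_κ} ∪ {aᵢ : i ≠ κ, ⟨b_κ, bᵢ⟩ ≠ 0}` spans `ℂ^{d₁}`; in particular the
index set `I_κ = {i ≠ κ : ⟨b_κ, bᵢ⟩ ≠ 0}` has at least `d₁ - 1` elements and each of its
members satisfies `⟨a_κ, aᵢ⟩ = 0`. -/
theorem product_basis_first_factor_span {d₁ d₂ : ℕ} (hd₁ : 0 < d₁) (hd₂ : 0 < d₂)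
    (a : Fin (d₁ * d₂) → EuclideanSpace ℂ (Fin d₁))
    (b : Fin (d₁ * d₂) → EuclideanSpace ℂ (Fin d₂))
    (ha : ∀ i, ‖a i‖ = 1) (hb : ∀ i, ‖b i‖ = 1)
    (hB : Orthonormal ℂ (fun i => eprod (a i) (b i)))
    (κ : Fin (d₁ * d₂)) :
    Submodule.span ℂ (insert (a κ) (a '' {i | i ≠ κ ∧ ⟪b κ, b i⟫ ≠ 0})) = ⊤ ∧
    d₁ - 1 ≤ {i | i ≠ κ ∧ ⟪b κ, b i⟫ ≠ 0}.ncard ∧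
    ∀ i, i ≠ κ → ⟪b κ, b i⟫ ≠ 0 → ⟪a κ, a i⟫ = 0 :=
  product_basis_first_factor_span_general a b hb hB κ
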